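/- Define h̃(w) = deg_t(w) + deg_s(w) for words w over Ψ, where deg_t and deg_s count the occurrences of the letters t and s. If two words w_1, w_2 over Ψ have equal images in the algebra H and this common image is nonzero, then h̃(w_1) = h̃(w_2). -/

import Mathlib

noncomputable section

/-- Direction of the head movement of the Turing machine. -/
inductive Dir
  | L
  | R
deriving DecidableEq

/-- The instruction table of Minsky's universal Turing machine: for a state `i` and a color `j`,
`instr i j` is `some (d, q, p)` where `d` is the direction of the head movement, `q` the new
state and `p` the new color of the current cell; it is `none` exactly for the STOP pair
`(4, 3)`. -/
def instr : Fin 7 → Fin 4 → Option (Dir × Fin 7 × Fin 4) := fun i j =>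
  match i.val, j.val with
  | 0, 0 => some (Dir.L, 4, 1)
  | 0, 1 => some (Dir.L, 1, 3)
  | 0, 2 => some (Dir.R, 0, 0)
  | 0, 3 => some (Dir.R, 0, 1)
  | 1, 0 => some (Dir.L, 1, 2)
  | 1, 1 => some (Dir.L, 1, 3)
  | 1, 2 => some (Dir.R, 0, 0)
  | 1, 3 => some (Dir.L, 1, 3)
  | 2, 0 => some (Dir.R, 2, 2)
  | 2, 1 => some (Dir.R, 2, 1)
  | 2, 2 => some (Dir.R, 2, 0)
  | 2, 3 => some (Dir.L, 4, 1)
  | 3, 0 => some (Dir.R, 3, 2)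
  | 3, 1 => some (Dir.R, 3, 1)
  | 3, 2 => some (Dir.R, 3, 0)
  | 3, 3 => some (Dir.L, 4, 0)
  | 4, 0 => some (Dir.L, 5, 2)
  | 4, 1 => some (Dir.L, 4, 1)
  | 4, 2 => some (Dir.L, 4, 0)
  | 4, 3 => none
  | 5, 0 => some (Dir.L, 5, 2)
  | 5, 1 => some (Dir.L, 5, 1)
  | 5, 2 => some (Dir.L, 6, 2)
  | 5, 3 => some (Dir.R, 2, 1)
  | 6, 0 => some (Dir.R, 0, 3)
  | 6, 1 => some (Dir.R, 6, 3)
  | 6, 2 => some (Dir.R, 6, 2)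
  | 6, 3 => some (Dir.R, 3, 1)
  | _, _ => none

/-- The alphabet `Ψ = {t, s, a_0, …, a_3, Q_0, …, Q_6, P_0, …, P_3, L, R}`. -/
inductive Psi
  | t
  | s
  | a (k : Fin 4)
  | Q (i : Fin 7)
  | P (j : Fin 4)
  | L
  | R
deriving DecidableEq, Fintype

/-- The image in the free algebra of a word over the alphabet `Ψ`. -/
def wrd (K : Type*) [Field K] (l : List Psi) : FreeAlgebra K Psi :=
  (l.map (FreeAlgebra.ι K)).prod

open Psi in
/-- The defining relations of the algebra `H`. -/
inductive HRel (K : Type*) [Field K] : FreeAlgebra K Psi → FreeAlgebra K Psi → Prop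
  | rel1 (k : Fin 4) :
      HRel K (wrd K [t, L, a k]) (wrd K [L, t, a k])
  | rel2 (k l : Fin 4) :
      HRel K (wrd K [t, a k, a l]) (wrd K [a k, t, a l])
  | rel9 :
      HRel K (wrd K [s, R]) (wrd K [R, s])
  | rel8 (k : Fin 4) :
      HRel K (wrd K [s, a k]) (wrd K [a k, s])
  | rel3 (i : Fin 7) (j : Fin 4) (q : Fin 7) (p : Fin 4) (k : Fin 4)
      (h : instr i j = some (Dir.L, q, p)) :
      HRel K (wrd K [t, a k, Q i, P j]) (wrd K [Q q, P k, a p, s])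
  | rel5 (i : Fin 7) (j : Fin 4) (q : Fin 7) (p : Fin 4)
      (h : instr i j = some (Dir.L, q, p)) :
      HRel K (wrd K [t, L, Q i, P j]) (wrd K [L, Q q, P 0, a p, s])
  | rel4 (i : Fin 7) (j : Fin 4) (q : Fin 7) (p : Fin 4) (l k : Fin 4)
      (h : instr i j = some (Dir.R, q, p)) :
      HRel K (wrd K [t, a l, Q i, P j, a k]) (wrd K [a l, a p, Q q, P k, s])
  | rel4b (i : Fin 7) (j : Fin 4) (q : Fin 7) (p : Fin 4) (k : Fin 4)
      (h : instr i j = some (Dir.R, q, p)) :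
      HRel K (wrd K [t, L, Q i, P j, a k]) (wrd K [L, a p, Q q, P k, s])
  | rel6 (i : Fin 7) (j : Fin 4) (q : Fin 7) (p : Fin 4) (l : Fin 4)
      (h : instr i j = some (Dir.R, q, p)) :
      HRel K (wrd K [t, a l, Q i, P j, R]) (wrd K [a l, a p, Q q, P 0, R, s])
  | rel6b (i : Fin 7) (j : Fin 4) (q : Fin 7) (p : Fin 4)
      (h : instr i j = some (Dir.R, q, p)) :
      HRel K (wrd K [t, L, Q i, P j, R]) (wrd K [L, a p, Q q, P 0, R, s])
  | rel7 :
      HRel K (wrd K [Q 4, P 3]) 0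

/-- The algebra `H`: the quotient of the free associative unital `K`-algebra on `Ψ` by the
two-sided ideal generated by the defining relations. -/
abbrev AlgH (K : Type*) [Field K] := RingQuot (HRel K)

/-- The image in `H` of a word over the alphabet `Ψ`. -/
def mkw (K : Type*) [Field K] (l : List Psi) : AlgH K :=
  RingQuot.mkAlgHom K (HRel K) (wrd K l)

/-- The image of the letter `t` in `H`. -/
def tEl (K : Type*) [Field K] : AlgH K := mkw K [Psi.t]

/-- The image of the letter `s` in `H`. -/
def sEl (K : Type*) [Field K] : AlgH K := mkw K [Psi.s]

/-- `h̃(w) = deg_t(w) + deg_s(w)`: the total number of occurrences of the letters `t` and `s`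
in the word `w`. -/
def htil (w : List Psi) : ℕ := w.count Psi.t + w.count Psi.s

/-!
Every defining relation of `H` is homogeneous for the weight `deg_t + deg_s`: the commutation
relations do not change the letters, each Turing-machine relation trades one `t` for one `s`, and
`Q_4 P_3 = 0` is monomial. Hence `H` is `ℕ`-graded with every word homogeneous of degree `h̃`,
and a nonzero element lies in at most one graded piece. The grading is realised as the algebra
map `H → H[ℕ]`, `w ↦ single (h̃ w) w`.
-/

section WeightGrading

open FreeAlgebra AddMonoidAlgebra

variable {R X M : Type*} [CommSemiring R] [AddMonoid M]

def weightGrading (w : X → M) (r : FreeAlgebra R X → FreeAlgebra R X → Prop) :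
    FreeAlgebra R X →ₐ[R] AddMonoidAlgebra (RingQuot r) M :=
  lift R fun x => single (w x) (RingQuot.mkAlgHom R r (ι R x))

theorem weightGrading_list_prod (w : X → M) (r : FreeAlgebra R X → FreeAlgebra R X → Prop)
    (l : List X) :
    weightGrading w r (l.map (ι R)).prod =
      single (l.map w).sum (RingQuot.mkAlgHom R r (l.map (ι R)).prod) := by
  induction l with
  | nil => simp [one_def]
  | cons x l ih =>
    simp only [List.map_cons, List.prod_cons, List.sum_cons, map_mul, ih]
    rw [weightGrading, lift_ι_apply, single_mul_single]

theorem weightGrading_list_prod_eq_of_rel {w : X → M}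
    {r : FreeAlgebra R X → FreeAlgebra R X → Prop} {l₁ l₂ : List X}
    (hr : r (l₁.map (ι R)).prod (l₂.map (ι R)).prod) (hw : (l₁.map w).sum = (l₂.map w).sum) :
    weightGrading w r (l₁.map (ι R)).prod = weightGrading w r (l₂.map (ι R)).prod := by
  rw [weightGrading_list_prod, weightGrading_list_prod, hw, RingQuot.mkAlgHom_rel R hr]

theorem weightGrading_list_prod_eq_zero_of_rel {w : X → M}
    {r : FreeAlgebra R X → FreeAlgebra R X → Prop} {l : List X}
    (hr : r (l.map (ι R)).prod 0) :
    weightGrading w r (l.map (ι R)).prod = 0 := by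
  rw [weightGrading_list_prod, RingQuot.mkAlgHom_rel R hr, map_zero, single_zero]

theorem list_sum_weight_eq_of_mkAlgHom_eq {w : X → M}
    {r : FreeAlgebra R X → FreeAlgebra R X → Prop}
    (hr : ∀ ⦃a b⦄, r a b → weightGrading w r a = weightGrading w r b) {l₁ l₂ : List X}
    (h : RingQuot.mkAlgHom R r (l₁.map (ι R)).prod = RingQuot.mkAlgHom R r (l₂.map (ι R)).prod)
    (hne : RingQuot.mkAlgHom R r (l₁.map (ι R)).prod ≠ 0) :
    (l₁.map w).sum = (l₂.map w).sum := by
  let grading := RingQuot.liftAlgHom R ⟨weightGrading w r, hr⟩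
  have grading_mk (l : List X) : grading (RingQuot.mkAlgHom R r (l.map (ι R)).prod) =
      single (l.map w).sum (RingQuot.mkAlgHom R r (l.map (ι R)).prod) := by
    rw [RingQuot.liftAlgHom_mkAlgHom_apply, weightGrading_list_prod]
  have hsingle := congrArg grading h
  rw [grading_mk, grading_mk, ← h] at hsingle
  exact (single_left_inj hne).1 hsingle

end WeightGrading

def Psi.tsDeg : Psi → ℕ
  | Psi.t => 1
  | Psi.s => 1
  | _ => 0

theorem htil_eq_sum_tsDeg (w : List Psi) : htil w = (w.map Psi.tsDeg).sum := by
  induction w with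
  | nil => rfl
  | cons x w ih =>
    cases x <;> simp [htil, Psi.tsDeg] at ih ⊢ <;> omega

theorem weightGrading_eq_of_hRel (K : Type*) [Field K] ⦃x y : FreeAlgebra K Psi⦄
    (h : HRel K x y) :
    weightGrading Psi.tsDeg (HRel K) x = weightGrading Psi.tsDeg (HRel K) y := by
  cases h
  case rel7 =>
    rw [map_zero]
    exact weightGrading_list_prod_eq_zero_of_rel HRel.rel7
  all_goals exact weightGrading_list_prod_eq_of_rel (by constructor <;> assumption) rfl

/-- If two words over `Ψ` have equal images in the algebra `H` and this
common image is nonzero, then `h̃(w₁) = h̃(w₂)`. -/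
theorem htil_eq_of_eq_of_ne_zero (K : Type*) [Field K] (w₁ w₂ : List Psi)
    (h : mkw K w₁ = mkw K w₂) (hne : mkw K w₁ ≠ 0) : htil w₁ = htil w₂ := by
  rw [htil_eq_sum_tsDeg, htil_eq_sum_tsDeg]
  exact list_sum_weight_eq_of_mkAlgHom_eq (weightGrading_eq_of_hRel K) h hne
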